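/- Let s(1),…,s(T) be i.i.d. real random variables with atomless distribution, and let α_1 < α_2 < … < α_T be distinct natural numbers. Then the T×T generalized Vandermonde matrix with entries M(i,j) = s(i)^{α_j} is invertible almost surely. -/

import Mathlib

/-!
The determinant of the generic matrix `(X i ^ α j)` is a nonzero polynomial: by injectivity of
`α` only the identity permutation contributes the monomial `∏ i, X i ^ α i`. The zero set of a
nonzero polynomial is null for every product of atomless σ-finite measures, by induction on the
number of variables and Fubini: off a null set of the last `n` coordinates the leading coefficient
in the first variable does not vanish, and then only finitely many values of the first coordinate
are roots. Independence makes the joint law of `(s 1, …, s T)` such a product.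
-/

open MeasureTheory ProbabilityTheory

theorem Finsupp.sum_single_perm_apply {ι M : Type*} [Fintype ι] [DecidableEq ι] [AddCommMonoid M]
    (σ : Equiv.Perm ι) (f : ι → M) (j : ι) :
    (∑ i, single (σ i) (f i)) (σ j) = f j := by
  simp [finsetSum_apply, single_apply, σ.injective.eq_iff]

namespace MvPolynomial

open Equiv Finsupp

section GeneralizedVandermonde

variable {R ι : Type*} [CommRing R] [Fintype ι] [DecidableEq ι]

theorem det_of_X_pow (α : ι → ℕ) :
    (Matrix.of fun i j => (X i : MvPolynomial ι R) ^ α j).det =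
      ∑ σ : Perm ι, Perm.sign σ • monomial (∑ i, single (σ i) (α i)) 1 := by
  simp [Matrix.det_apply, X_pow_eq_monomial, monomial_sum_one]

theorem coeff_det_of_X_pow {α : ι → ℕ} (hα : Function.Injective α) :
    coeff (∑ i, single i (α i))
      (Matrix.of fun i j => (X i : MvPolynomial ι R) ^ α j).det = 1 := by
  have hexp : ∀ σ : Perm ι,
      ∑ i, single (σ i) (α i) = ∑ i, single i (α i) ↔ σ = 1 := by
    refine fun σ => ⟨fun h => Equiv.ext fun j => hα ?_, fun h => by simp [h]⟩
    have hj := congr($h (σ j))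
    rw [sum_single_perm_apply] at hj
    simpa [finsetSum_apply, single_apply] using hj.symm
  rw [det_of_X_pow, coeff_sum, Finset.sum_eq_single_of_mem 1 (Finset.mem_univ _)]
  · simp
  · intro σ _ hσ
    rw [coeff_smul, coeff_monomial, if_neg (mt (hexp σ).1 hσ), smul_zero]

theorem det_of_X_pow_ne_zero [Nontrivial R] {α : ι → ℕ} (hα : Function.Injective α) :
    (Matrix.of fun i j => (X i : MvPolynomial ι R) ^ α j).det ≠ 0 := fun h => by
  simpa [h] using coeff_det_of_X_pow (R := R) hα

theorem eval_det_of_X_pow (x : ι → R) (α : ι → ℕ) :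
    eval x (Matrix.of fun i j => (X i : MvPolynomial ι R) ^ α j).det =
      (Matrix.of fun i j => x i ^ α j).det := by
  rw [RingHom.map_det]
  congr 1
  ext i j
  simp

end GeneralizedVandermonde

section ZeroLocus

variable {K : Type*} [Field K] [TopologicalSpace K] [IsTopologicalRing K] [T2Space K]
  [SecondCountableTopology K] [MeasurableSpace K] [BorelSpace K]

theorem ae_eval_ne_zero {n : ℕ} {p : MvPolynomial (Fin n) K} (hp : p ≠ 0)
    (ν : Fin n → Measure K) [∀ i, SigmaFinite (ν i)] [∀ i, NullSingletonClass (ν i)] :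
    ∀ᵐ x ∂Measure.pi ν, eval x p ≠ 0 := by
  induction n with
  | zero =>
    obtain ⟨c, rfl⟩ := C_surjective (Fin 0) p
    exact .of_forall fun x => by simpa using hp
  | succ n ih =>
    set q := finSuccEquiv K n p
    have hq : q ≠ 0 := EmbeddingLike.map_ne_zero_iff.2 hp
    have hlead : ∀ᵐ z ∂Measure.pi (fun j => ν j.succ), eval z q.leadingCoeff ≠ 0 :=
      ih (Polynomial.leadingCoeff_ne_zero.2 hq) _
    have hslice : ∀ᵐ z ∂Measure.pi (fun j => ν j.succ), ∀ᵐ y ∂ν 0,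
        eval (Fin.cons y z) p ≠ 0 := by
      filter_upwards [hlead] with z hz
      have hqz : q.map (eval z) ≠ 0 := fun h => hz <| by
        rw [← Polynomial.coeff_natDegree, ← Polynomial.coeff_map, h, Polynomial.coeff_zero]
      filter_upwards [(Polynomial.finite_setOfPred_isRoot hqz).countable.ae_notMem (ν 0)] with y hy
      rwa [eval_eq_eval_mv_eval']
    have hmeas : MeasurableSet {yz : K × (Fin n → K) | eval (Fin.cons yz.1 yz.2) p ≠ 0} :=
      (isOpen_ne_fun ((continuous_eval p).comp (continuous_fst.finCons continuous_snd))
        continuous_const).measurableSet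
    have hprod : ∀ᵐ yz ∂(ν 0).prod (Measure.pi fun j => ν j.succ),
        eval (Fin.cons yz.1 yz.2) p ≠ 0 :=
      (Measure.ae_prod_iff_ae_ae hmeas).2 <|
        (Measure.ae_ae_comm (p := fun y z => eval (Fin.cons y z) p ≠ 0) hmeas).2 hslice
    simpa using (measurePreserving_piFinSuccAbove ν 0).quasiMeasurePreserving.ae hprod

end ZeroLocus

end MvPolynomial

theorem generalized_vandermonde_invertible_general
    {Ω : Type*} [MeasurableSpace Ω] (μ : Measure Ω) [IsProbabilityMeasure μ]
    (T : ℕ) (s : Fin T → Ω → ℝ)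
    (hmeas : ∀ i, Measurable (s i))
    (hindep : iIndepFun s μ)
    (hatomless : ∀ i, NoAtoms (μ.map (s i)))
    (α : Fin T → ℕ) (hα : StrictMono α) :
    ∀ᵐ ω ∂μ, IsUnit (Matrix.of fun i j : Fin T => (s i ω) ^ (α j)) := by
  have : ∀ i, IsProbabilityMeasure (μ.map (s i)) :=
    fun i => Measure.isProbabilityMeasure_map (hmeas i).aemeasurable
  -- `NoAtoms` is a plain alias, so instance search does not see `hatomless` itself
  have : ∀ i, NullSingletonClass (μ.map (s i)) := hatomless
  have hlaw : μ.map (fun ω i => s i ω) = Measure.pi fun i => μ.map (s i) :=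
    hindep.map_fun_eq_pi_map fun i => (hmeas i).aemeasurable
  have hdet := MvPolynomial.ae_eval_ne_zero
    (MvPolynomial.det_of_X_pow_ne_zero (R := ℝ) hα.injective) fun i => μ.map (s i)
  rw [← hlaw] at hdet
  filter_upwards [ae_of_ae_map (measurable_pi_lambda _ hmeas).aemeasurable hdet] with ω hω
  rwa [Matrix.isUnit_iff_isUnit_det, isUnit_iff_ne_zero, ← MvPolynomial.eval_det_of_X_pow]

/-- Generalized Vandermonde: if s(1),…,s(T) are i.i.d. real random variables
with atomless law and α₁ < ⋯ < α_T are distinct naturals, then the matrix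
M(i,j) = s(i)^{αⱼ} is invertible almost surely. -/
theorem generalized_vandermonde_invertible
    {Ω : Type*} [MeasurableSpace Ω] (μ : Measure Ω) [IsProbabilityMeasure μ]
    (T : ℕ) (s : Fin T → Ω → ℝ)
    (hmeas : ∀ i, Measurable (s i))
    (hindep : iIndepFun s μ)
    (hiid : ∀ i j, μ.map (s i) = μ.map (s j))
    (hatomless : ∀ i, NoAtoms (μ.map (s i)))
    (α : Fin T → ℕ) (hα : StrictMono α) :
    ∀ᵐ ω ∂μ, IsUnit (Matrix.of fun i j : Fin T => (s i ω) ^ (α j)) :=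
  generalized_vandermonde_invertible_general μ T s hmeas hindep hatomless α hα
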